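/- Let g, h ∈ G' with h ∈ ε(g) \ {g}. Then there exists an uphill g₀a₁g₁⋯aₙgₙ with n = ↑(g) − ↑(h), g₀ = h, gₙ = g, and gⱼ ∈ ε(g) for all 0 ≤ j ≤ n. -/
import Mathlib


namespace WGO

/-- Letters: the anchors `1`, `x`, `x'` (written `one`, `x`, `xp`) and 5-tuples. -/
inductive Letter : Type
  | one : Letter
  | x : Letter
  | xp : Letter
  | tup : Letter → Letter → Letter → Letter → Letter → Letter
deriving DecidableEq

/-- The involution on anchors: `x' = xp`, `xp' = x`, `1' = 1` (junk on tuples). -/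
def ainv : Letter → Letter
  | .x => .xp
  | .xp => .x
  | a => a

/-- Left entry `g^l`. -/
def Letter.lft : Letter → Letter
  | .tup l _ _ _ _ => l
  | _ => .one

/-- Left anchor `g^{la}`. -/
def Letter.lfta : Letter → Letter
  | .tup _ la _ _ _ => la
  | _ => .one

/-- Middle entry `g^c`. -/
def Letter.ctr : Letter → Letter
  | .tup _ _ c _ _ => c
  | _ => .one

/-- Right anchor `g^{ra}`. -/
def Letter.rgta : Letter → Letter
  | .tup _ _ _ ra _ => ra
  | _ => .one

/-- Right entry `g^r`. -/
def Letter.rgt : Letter → Letter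
  | .tup _ _ _ _ r => r
  | _ => .one

/-- The 5-tuple `g_{xx'} = (1,1,x,x',1)`. -/
def gxx : Letter := .tup .one .one .x .xp .one

/-- The set of anchors `A = {1, x, x'}`. -/
def AnchorS : Set Letter := {Letter.one, Letter.x, Letter.xp}

/-- The sets `G_{i,e}`. -/
def Ge : ℕ → Set Letter
  | 0 => ∅
  | 1 => {gxx}
  | (i+2) => {h | ∃ g ∈ Ge (i+1),
      h = Letter.tup g (ainv g.lfta) g.lft (ainv g.rgta) g ∨
      h = Letter.tup g (ainv g.rgta) g.lft (ainv g.lfta) g}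

/-- The sets `G_{i,d}`. -/
def Gd : ℕ → Set Letter
  | 0 => ∅
  | 1 => ∅
  | 2 => ∅
  | (i+3) => {h | ∃ l la c ra r, h = Letter.tup l la c ra r ∧
      l ∈ Ge (i+2) ∪ Gd (i+2) ∧ r ∈ Ge (i+2) ∪ Gd (i+2) ∧
      c ∈ Ge (i+1) ∪ Gd (i+1) ∧ la ∈ AnchorS ∧ ra ∈ AnchorS ∧
      l ≠ r ∧
      ((c = l.lft ∧ la = ainv l.lfta) ∨ (c = l.rgt ∧ la = ainv l.rgta)) ∧
      ((c = r.lft ∧ ra = ainv r.lfta) ∨ (c = r.rgt ∧ ra = ainv r.rgta))}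

/-- `G_i = G_{i,e} ∪ G_{i,d}`. -/
def GI (i : ℕ) : Set Letter := Ge i ∪ Gd i

/-- `G⁵ = ⋃_{i ≥ 1} G_i`. -/
def G5 : Set Letter := {g | ∃ i, g ∈ GI i}

/-- `G = G⁵ ∪ A`. -/
def Gset : Set Letter := G5 ∪ AnchorS

/-- `G' = G⁵ ∪ {1}`. -/
def Gp : Set Letter := G5 ∪ {Letter.one}

/-- The height `↑(g)`: `0` on `1` (and anchors), and `i` on members of `G_i`. -/
def ht : Letter → ℕ
  | .tup l _ _ _ _ => ht l + 1
  | _ => 0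

/-- The free semigroup `G⁺` (on the ambient type of letters). -/
abbrev W := FreeSemigroup Letter

/-- One-letter word. -/
def wd : Letter → W := FreeSemigroup.of

/-- The word `g^L = (g^{la})' g^l g^{la}`. -/
def gLw (g : Letter) : W := wd (ainv g.lfta) * wd g.lft * wd g.lfta

/-- The word `g^R = (g^{ra})' g^r g^{ra}`. -/
def gRw (g : Letter) : W := wd (ainv g.rgta) * wd g.rgt * wd g.rgta

/-- The generating relation `ρ_e ∪ ρ_s`. -/
def rhoBase : W → W → Prop := fun u v =>
  (u = wd .x * wd .xp * wd .x ∧ v = wd .x) ∨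
  (u = wd .xp * wd .x * wd .xp ∧ v = wd .xp) ∨
  (u = wd gxx ∧ v = wd .x * wd .xp) ∨
  (∃ g ∈ Gp, u = wd .one * wd g ∧ v = wd g) ∨
  (∃ g ∈ Gp, u = wd g * wd .one ∧ v = wd g) ∨
  (∃ g ∈ Gp, u = wd g * wd g ∧ v = wd g) ∨
  (∃ g ∈ G5, 2 ≤ ht g ∧ u = wd g.ctr * gLw g * wd g ∧ v = wd g) ∨
  (∃ g ∈ G5, 2 ≤ ht g ∧ u = wd g * gRw g * wd g.ctr ∧ v = wd g) ∨
  (∃ g ∈ G5, 2 ≤ ht g ∧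
    u = wd g.rgt * wd g.rgta * wd g * wd (ainv g.lfta) * wd g.lft ∧
    v = wd g.rgt * wd g.rgta * wd g.ctr * wd (ainv g.lfta) * wd g.lft)

/-- The congruence `ρ`: the smallest congruence on `G⁺` containing `ρ_e ∪ ρ_s`. -/
def rho : Con W := conGen rhoBase

/-- The quotient `F¹ = G⁺/ρ`. -/
abbrev F1 := rho.Quotient

/-- The `ρ`-class `[u]`. -/
def cls (u : W) : F1 := (u : F1)

/-- The word of a nonempty list of letters (junk on `[]`). -/
def wordOf : List Letter → W
  | [] => wd .one
  | a :: t => t.foldl (fun w b => w * wd b) (wd a)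

/-! ### Landscapes -/

/-- A landscape datum: the first letter `g₀` together with the list of pairs
`(a₁,g₁), …, (aₙ,gₙ)`, encoding the alternating word `g₀a₁g₁⋯aₙgₙ`. -/
abbrev LS := Letter × List (Letter × Letter)

/-- The last letter `τ(u)`. -/
def lastL (u : LS) : Letter := u.2.foldl (fun _ p => p.2) u.1

/-- The letters `g₀, g₁, …, gₙ` of a landscape datum. -/
def letters (u : LS) : List Letter := u.1 :: u.2.map Prod.snd

/-- The underlying word as a list of letters, `g₀ a₁ g₁ ⋯ aₙ gₙ`. -/
def flat (u : LS) : List Letter := u.1 :: u.2.foldr (fun p r => p.1 :: p.2 :: r) []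

/-- The underlying word in `G⁺`. -/
def toW (u : LS) : W := u.2.foldl (fun w p => w * wd p.1 * wd p.2) (wd u.1)

/-- `u₁ * u₂`: concatenation of landscapes merging the doubled letter `τ(u₁) = σ(u₂)`. -/
def star (u v : LS) : LS := (u.1, u.2 ++ v.2)

/-- The triplet `g₁ a g` is left anchored. -/
def LeftAnchored (g1 a g : Letter) : Prop :=
  g ∈ G5 ∧ ((g1 = g.lft ∧ a = g.lfta) ∨ (g1 = g.rgt ∧ a = g.rgta))

/-- The triplet `g a g₁` is right anchored. -/
def RightAnchored (g a g1 : Letter) : Prop :=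
  g ∈ G5 ∧ ((g1 = g.lft ∧ a = ainv g.lfta) ∨ (g1 = g.rgt ∧ a = ainv g.rgta))

/-- The triplet `g₁ a g₂` is anchored. -/
def Anchored (g1 a g2 : Letter) : Prop :=
  LeftAnchored g1 a g2 ∨ RightAnchored g1 a g2

/-- All consecutive triplets are anchored. -/
def Chain : Letter → List (Letter × Letter) → Prop
  | _, [] => True
  | g, (a, g') :: t => Anchored g a g' ∧ Chain g' t

/-- `u` is a landscape. -/
def IsLandscape (u : LS) : Prop :=
  u.1 ∈ Gp ∧ (∀ p ∈ u.2, p.1 ∈ AnchorS ∧ p.2 ∈ Gp) ∧ Chain u.1 u.2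

/-- Each step goes up: `g_{j-1} ∈ {gⱼ^l, gⱼ^r}`. -/
def UpChain : Letter → List (Letter × Letter) → Prop
  | _, [] => True
  | g, (_, g') :: t => (g = g'.lft ∨ g = g'.rgt) ∧ UpChain g' t

/-- Each step goes down: `gⱼ ∈ {g_{j-1}^l, g_{j-1}^r}`. -/
def DownChain : Letter → List (Letter × Letter) → Prop
  | _, [] => True
  | g, (_, g') :: t => (g' = g.lft ∨ g' = g.rgt) ∧ DownChain g' t

/-- `u` is an uphill. -/
def IsUphill (u : LS) : Prop := IsLandscape u ∧ u.2 ≠ [] ∧ UpChain u.1 u.2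

/-- `u` is a downhill. -/
def IsDownhill (u : LS) : Prop := IsLandscape u ∧ u.2 ≠ [] ∧ DownChain u.1 u.2

/-- The letter `gⱼ` is a river of `u` (an interior letter with both neighbours one higher). -/
def IsRiverAt (u : LS) (j : ℕ) : Prop :=
  0 < j ∧ j + 1 < (letters u).length ∧
  ht ((letters u).getD (j-1) .one) = ht ((letters u).getD j .one) + 1 ∧
  ht ((letters u).getD (j+1) .one) = ht ((letters u).getD j .one) + 1

/-- `u` has no rivers. -/
def NoRivers (u : LS) : Prop := ∀ j, ¬ IsRiverAt u j

/-- `u` is a mountain range: a landscape with `σ(u) = τ(u) = 1`. -/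
def IsMountainRange (u : LS) : Prop :=
  IsLandscape u ∧ u.1 = Letter.one ∧ lastL u = Letter.one

/-- `u` is a mountain: a mountain range with no rivers. -/
def IsMountain (u : LS) : Prop := IsMountainRange u ∧ NoRivers u

/-- Uplifting of a river: `u → v`. -/
def Uplift (u v : LS) : Prop :=
  v.1 = u.1 ∧ ∃ t1 a gr b gn t2,
    u.2 = t1 ++ (a, gr) :: (b, gn) :: t2 ∧
    ht (lastL (u.1, t1)) = ht gr + 1 ∧ ht gn = ht gr + 1 ∧
    ((lastL (u.1, t1) = gn ∧ a = ainv b ∧ v.2 = t1 ++ t2) ∨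
     (¬(lastL (u.1, t1) = gn ∧ a = ainv b) ∧
       v.2 = t1 ++ (a, Letter.tup gn (ainv b) gr a (lastL (u.1, t1))) :: (b, gn) :: t2))

/-- `→*`: iterated uplifting of rivers. -/
def UpliftStar : LS → LS → Prop := Relation.ReflTransGen Uplift

/-! ### The maps β₁ and related functions -/

/-- `g^{cⁿ}`: the base of the tower of centers (the first entry of `β₁(g)`'s hills). -/
def cbase : Letter → Letter
  | .tup l la c ra r => if ht l = 0 then Letter.tup l la c ra r else cbase c
  | g => g

/-- The pair list of the uphill `β_{1,l}(g)` (starting letter `cbase g`). -/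
def lPairs : Letter → List (Letter × Letter)
  | .tup l la c ra r =>
      if ht l = 0 then []
      else lPairs c ++ [(ainv la, l), (la, Letter.tup l la c ra r)]
  | _ => []

/-- The pair list of the downhill `β_{1,r}(g)` (starting letter `g`). -/
def rPairs : Letter → List (Letter × Letter)
  | .tup l _ c ra r =>
      if ht l = 0 then []
      else (ainv ra, r) :: (ra, c) :: rPairs c
  | _ => []

/-- `β₁` on a single letter of `G`. -/
def beta1L : Letter → LS
  | .one => (.one, [])
  | .x => (.one, [(.one, gxx), (.x, .one)])
  | .xp => (.one, [(.xp, gxx), (.one, .one)])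
  | g => if ht g % 2 = 0 then (cbase g, lPairs g ++ rPairs g)
         else (.one, (.one, cbase g) :: (lPairs g ++ rPairs g ++ [(.one, .one)]))

/-- `β₁` on a word (given as a list of letters): the `*`-product of the `β₁` of its letters. -/
def beta1W (l : List Letter) : LS := (.one, (l.map (fun h => (beta1L h).2)).flatten)

/-! ### Hills of mountains, peaks, reverses -/

/-- Pair list of the maximal uphill prefix. -/
def lamLPairs : Letter → List (Letter × Letter) → List (Letter × Letter)
  | _, [] => []
  | g, (a, g') :: t => if ht g < ht g' then (a, g') :: lamLPairs g' t else []

/-- The left hill `λ_l(u)` of a mountain. -/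
def lamL (u : LS) : LS := (u.1, lamLPairs u.1 u.2)

/-- The peak `κ(u)` of a mountain. -/
def peak (u : LS) : Letter := lastL (lamL u)

/-- The right hill `λ_r(u)` of a mountain. -/
def lamR (u : LS) : LS := (peak u, u.2.drop (lamLPairs u.1 u.2).length)

/-- Pair list of the reverse of a landscape. -/
def revPairs : Letter → List (Letter × Letter) → List (Letter × Letter)
  | _, [] => []
  | g, (a, g') :: t => revPairs g' t ++ [(ainv a, g)]

/-- The reverse `ū` of a landscape `u`. -/
def rev (u : LS) : LS := (lastL u, revPairs u.1 u.2)

/-! ### Green's relations on `F¹` -/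

/-- `s ≤_R t` : `s F¹ ⊆ t F¹`. -/
def leR (s t : F1) : Prop := ∀ y : F1, (∃ m, y = s * m) → ∃ m, y = t * m

/-- `s ≤_L t` : `F¹ s ⊆ F¹ t`. -/
def leL (s t : F1) : Prop := ∀ y : F1, (∃ m, y = m * s) → ∃ m, y = m * t

/-- `s ≤_J t` : `F¹ s F¹ ⊆ F¹ t F¹`. -/
def leJ (s t : F1) : Prop := ∀ y : F1, (∃ p q, y = p * s * q) → ∃ p q, y = p * t * q

/-- Green's relation `R`. -/
def Rrel (s t : F1) : Prop := leR s t ∧ leR t s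

/-- Green's relation `L`. -/
def Lrel (s t : F1) : Prop := leL s t ∧ leL t s

/-- Green's relation `J`. -/
def Jrel (s t : F1) : Prop := leJ s t ∧ leJ t s

/-- Green's relation `H = R ∩ L`. -/
def Hrel (s t : F1) : Prop := Rrel s t ∧ Lrel s t

/-- Green's relation `D = L ∨ R` (the join of the equivalences `L` and `R`). -/
def Drel : F1 → F1 → Prop := Relation.EqvGen (fun s t => Lrel s t ∨ Rrel s t)

/-- The sandwich set `S(e,f)` in `F¹`. -/
def sandw (e f : F1) : Set F1 :=
  {h | h * h = h ∧ f * h = h ∧ h * e = h ∧ e * h * f = e * f}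

/-- The ground `ε(g)`. -/
def ground : Letter → Set Letter
  | .tup l la c ra r => ground l ∪ {Letter.tup l la c ra r} ∪ ground r
  | g => {g}

/-- `F = F¹ \ {[1]}`. -/
def Fset : Set F1 := {s | s ≠ cls (wd .one)}

/-- A valley: a downhill followed by an uphill, merged at the lowest letter. -/
def IsValley (w : LS) : Prop :=
  ∃ d u : LS, IsDownhill d ∧ IsUphill u ∧ lastL d = u.1 ∧ w = star d u

/-- A canyon: a valley with `σ(w) = τ(w)`. -/
def IsCanyon (w : LS) : Prop := IsValley w ∧ w.1 = lastL w

/-- A gorge: a canyon with `w →* σ(w)`. -/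
def IsGorge (w : LS) : Prop := IsCanyon w ∧ UpliftStar w (w.1, [])


lemma ainv_mem {a : Letter} (ha : a ∈ AnchorS) : ainv a ∈ AnchorS := by
  simp only [AnchorS, Set.mem_insert_iff, Set.mem_singleton_iff] at ha ⊢
  rcases ha with rfl | rfl | rfl <;> simp [ainv]

/-- Structural facts about members of `GI i`. -/
def Good (g : Letter) (i : ℕ) : Prop :=
  (∃ l la c ra r, g = Letter.tup l la c ra r) ∧ ht g = i ∧
  g.lft ∈ Gp ∧ g.rgt ∈ Gp ∧ ht g.rgt + 1 = i ∧
  g.lfta ∈ AnchorS ∧ g.rgta ∈ AnchorS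

lemma geStep {k : ℕ} (IH : ∀ g ∈ GI (k+1), Good g (k+1)) :
    ∀ g ∈ Ge (k+2), Good g (k+2) := by
  intro g hg
  rw [show Ge (k+2) = {h | ∃ g ∈ Ge (k+1),
      h = Letter.tup g (ainv g.lfta) g.lft (ainv g.rgta) g ∨
      h = Letter.tup g (ainv g.rgta) g.lft (ainv g.lfta) g} from rfl] at hg
  obtain ⟨g', hg', hcase⟩ := hg
  obtain ⟨⟨l, la, c, ra, r, rfl⟩, hht, -, -, -, hla, hra⟩ := IH g' (Or.inl hg')
  have hGp : Letter.tup l la c ra r ∈ Gp := Or.inl ⟨k+1, Or.inl hg'⟩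
  rcases hcase with rfl | rfl
  · exact ⟨⟨_, _, _, _, _, rfl⟩, by simp only [ht] at hht ⊢; omega, hGp, hGp,
      by simp only [Letter.rgt, hht], ainv_mem hla, ainv_mem hra⟩
  · exact ⟨⟨_, _, _, _, _, rfl⟩, by simp only [ht] at hht ⊢; omega, hGp, hGp,
      by simp only [Letter.rgt, hht], ainv_mem hra, ainv_mem hla⟩

lemma memGI : ∀ i, ∀ g ∈ GI i, Good g i := by
  intro i
  induction i using Nat.strong_induction_on with
  | _ i ih =>
    match i with
    | 0 => intro g hg; rcases hg with hg | hg <;> simp [Ge, Gd] at hg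
    | 1 =>
      intro g hg
      rcases hg with hg | hg
      · simp only [Ge, Set.mem_singleton_iff] at hg
        subst hg
        refine ⟨⟨_, _, _, _, _, rfl⟩, rfl, Or.inr rfl, Or.inr rfl, rfl, ?_, ?_⟩ <;>
          simp [gxx, Letter.lfta, Letter.rgta, AnchorS]
      · simp [Gd] at hg
    | 2 =>
      intro g hg
      rcases hg with hg | hg
      · exact geStep (ih 1 (by omega)) g hg
      · simp [Gd] at hg
    | (n+3) =>
      intro g hg
      rcases hg with hg | hg
      · exact geStep (ih (n+2) (by omega)) g hg
      · rw [show Gd (n+3) = {h | ∃ l la c ra r, h = Letter.tup l la c ra r ∧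
            l ∈ Ge (n+2) ∪ Gd (n+2) ∧ r ∈ Ge (n+2) ∪ Gd (n+2) ∧
            c ∈ Ge (n+1) ∪ Gd (n+1) ∧ la ∈ AnchorS ∧ ra ∈ AnchorS ∧
            l ≠ r ∧
            ((c = l.lft ∧ la = ainv l.lfta) ∨ (c = l.rgt ∧ la = ainv l.rgta)) ∧
            ((c = r.lft ∧ ra = ainv r.lfta) ∨ (c = r.rgt ∧ ra = ainv r.rgta))} from rfl] at hg
        obtain ⟨l, la, c, ra, r, rfl, hl, hr, -, hla, hra, -, -, -⟩ := hg
        have hlG : Good l (n+2) := ih (n+2) (by omega) l hl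
        have hrG : Good r (n+2) := ih (n+2) (by omega) r hr
        exact ⟨⟨_, _, _, _, _, rfl⟩, by simp [ht, hlG.2.1],
          Or.inl ⟨n+2, hl⟩, Or.inl ⟨n+2, hr⟩,
          by simp [Letter.rgt, hrG.2.1], hla, hra⟩

lemma g5_good {g : Letter} (hg : g ∈ G5) : ∃ i, Good g i := by
  obtain ⟨i, hi⟩ := hg; exact ⟨i, memGI i g hi⟩

lemma ground_le : ∀ g ∈ Gp, ∀ h ∈ ground g, ht h ≤ ht g ∧ h ∈ Gp := by
  intro g
  induction g with
  | tup l la c ra r ihl _ _ _ ihr =>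
    intro hg h hh
    have hG5 : Letter.tup l la c ra r ∈ G5 := by
      rcases hg with h5 | h1
      · exact h5
      · exact absurd h1 (by simp)
    obtain ⟨i, -, hhti, hlp, hrp, hrht, -, -⟩ := g5_good hG5
    have hlft : ht l + 1 = i := hhti
    have hrgt : ht r + 1 = i := hrht
    rcases hh with (hh | hh) | hh
    · obtain ⟨h1, h2⟩ := ihl hlp h hh
      exact ⟨by simp only [ht]; omega, h2⟩
    · rcases hh with rfl
      exact ⟨le_rfl, hg⟩
    · obtain ⟨h1, h2⟩ := ihr hrp h hh
      exact ⟨by simp only [ht]; omega, h2⟩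
  | one => intro hg h hh; rcases hh with rfl; exact ⟨le_rfl, hg⟩
  | x => intro hg h hh; rcases hh with rfl; exact ⟨le_rfl, hg⟩
  | xp => intro hg h hh; rcases hh with rfl; exact ⟨le_rfl, hg⟩

lemma letters_snoc (g0 : Letter) (t : List (Letter × Letter)) (a g : Letter) :
    letters (g0, t ++ [(a, g)]) = letters (g0, t) ++ [g] := by
  simp [letters]

lemma lastL_snoc (g0 : Letter) (t : List (Letter × Letter)) (a g : Letter) :
    lastL (g0, t ++ [(a, g)]) = g := by
  simp [lastL, List.foldl_append]

lemma lastL_cons (g0 a g : Letter) (t : List (Letter × Letter)) :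
    lastL (g0, (a, g) :: t) = lastL (g, t) := rfl

lemma chain_snoc : ∀ (t : List (Letter × Letter)) (g0 a g : Letter),
    Chain g0 t → Anchored (lastL (g0, t)) a g → Chain g0 (t ++ [(a, g)]) := by
  intro t
  induction t with
  | nil => exact fun g0 a g _ h => ⟨h, trivial⟩
  | cons p t ih =>
    intro g0 a g hc hanch
    obtain ⟨a', g'⟩ := p
    exact ⟨hc.1, ih g' a g hc.2 hanch⟩

lemma upchain_snoc : ∀ (t : List (Letter × Letter)) (g0 a g : Letter),
    UpChain g0 t → (lastL (g0, t) = g.lft ∨ lastL (g0, t) = g.rgt) →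
    UpChain g0 (t ++ [(a, g)]) := by
  intro t
  induction t with
  | nil => exact fun g0 a g _ h => ⟨h, trivial⟩
  | cons p t ih =>
    intro g0 a g hc hlast
    obtain ⟨a', g'⟩ := p
    exact ⟨hc.1, ih g' a g hc.2 hlast⟩

lemma main_ground : ∀ g ∈ Gp, ∀ h ∈ ground g, h ≠ g →
    ∃ u : LS, IsUphill u ∧ u.1 = h ∧ lastL u = g ∧ u.2.length = ht g - ht h ∧
      ∀ a ∈ letters u, a ∈ ground g := by
  intro g
  induction g with
  | one => intro _ h hh hne; rcases hh with rfl; exact absurd rfl hne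
  | x =>
    intro hg
    rcases hg with h5 | h1
    · obtain ⟨i, ⟨l, la, c, ra, r, heq⟩, -⟩ := g5_good h5; exact absurd heq (by simp)
    · exact absurd h1 (by simp)
  | xp =>
    intro hg
    rcases hg with h5 | h1
    · obtain ⟨i, ⟨l, la, c, ra, r, heq⟩, -⟩ := g5_good h5; exact absurd heq (by simp)
    · exact absurd h1 (by simp)
  | tup l la c ra r ihl _ _ _ ihr =>
    intro hg h hh hne
    set g : Letter := Letter.tup l la c ra r with hgdef
    have hG5 : g ∈ G5 := by
      rcases hg with h5 | h1
      · exact h5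
      · exact absurd h1 (by simp [hgdef])
    obtain ⟨i, -, hhti, hlp, hrp, hrht, hlaA, hraA⟩ := g5_good hG5
    have hlft : g.lft = l := rfl
    have hrgt : g.rgt = r := rfl
    have hhtg : ht g = ht l + 1 := rfl
    have hhtr : ht r = ht l := by
      have : ht g.rgt + 1 = i := hrht
      rw [hrgt] at this; omega
    have hself : g ∈ ground g := Or.inl (Or.inr rfl)
    have hanchL : Anchored l la g := Or.inl ⟨hG5, Or.inl ⟨rfl, rfl⟩⟩
    have hanchR : Anchored r ra g := Or.inl ⟨hG5, Or.inr ⟨rfl, rfl⟩⟩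
    have hlaA' : la ∈ AnchorS := hlaA
    have hraA' : ra ∈ AnchorS := hraA
    have hgp : g ∈ Gp := Or.inl hG5
    rcases hh with (hh | hh) | hh
    · -- h ∈ ground l
      by_cases hcase : h = l
      · subst hcase
        refine ⟨(h, [(la, g)]), ⟨⟨hlp, ?_, hanchL, trivial⟩, by simp, Or.inl rfl, trivial⟩,
          rfl, rfl, by simp [hhtg], ?_⟩
        · intro p hp
          simp only [List.mem_singleton] at hp
          subst hp
          exact ⟨hlaA', hgp⟩
        · intro a ha
          simp only [letters, List.map_cons, List.map_nil, List.mem_cons,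
            List.mem_singleton, List.not_mem_nil, or_false] at ha
          rcases ha with rfl | rfl
          · exact Or.inl (Or.inl hh)
          · exact hself
      · obtain ⟨u, ⟨⟨hu1, hu2, hu3⟩, hune, hup⟩, huh, hulast, hlen, hsub⟩ :=
          ihl hlp h hh hcase
        have hle : ht h ≤ ht l := ((ground_le l hlp h hh).1)
        have hlastu : lastL (u.1, u.2) = l := by rw [← hulast]
        refine ⟨(u.1, u.2 ++ [(la, g)]), ⟨⟨hu1, ?_, ?_⟩, by simp, ?_⟩,
          huh, lastL_snoc _ _ _ _, ?_, ?_⟩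
        · intro p hp
          rcases List.mem_append.1 hp with hp | hp
          · exact hu2 p hp
          · simp only [List.mem_singleton] at hp; subst hp; exact ⟨hlaA', hgp⟩
        · exact chain_snoc u.2 u.1 la g hu3 (hlastu ▸ hanchL)
        · exact upchain_snoc u.2 u.1 la g hup (Or.inl (by rw [hlastu]; rfl))
        · simp only [List.length_append, List.length_singleton, hlen, hhtg]; omega
        · intro a ha
          rw [letters_snoc] at ha
          rcases List.mem_append.1 ha with ha | ha
          · exact Or.inl (Or.inl (hsub a ha))
          · simp only [List.mem_singleton] at ha; subst ha; exact hself
    · rcases hh with rfl; exact absurd rfl hne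
    · -- h ∈ ground r
      by_cases hcase : h = r
      · subst hcase
        refine ⟨(h, [(ra, g)]), ⟨⟨hrp, ?_, hanchR, trivial⟩, by simp, Or.inr rfl, trivial⟩,
          rfl, rfl, by simp [hhtg, hhtr], ?_⟩
        · intro p hp
          simp only [List.mem_singleton] at hp
          subst hp
          exact ⟨hraA', hgp⟩
        · intro a ha
          simp only [letters, List.map_cons, List.map_nil, List.mem_cons,
            List.mem_singleton, List.not_mem_nil, or_false] at ha
          rcases ha with rfl | rfl
          · exact Or.inr hh
          · exact hself
      · obtain ⟨u, ⟨⟨hu1, hu2, hu3⟩, hune, hup⟩, huh, hulast, hlen, hsub⟩ :=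
          ihr hrp h hh hcase
        have hle : ht h ≤ ht r := ((ground_le r hrp h hh).1)
        have hlastu : lastL (u.1, u.2) = r := by rw [← hulast]
        refine ⟨(u.1, u.2 ++ [(ra, g)]), ⟨⟨hu1, ?_, ?_⟩, by simp, ?_⟩,
          huh, lastL_snoc _ _ _ _, ?_, ?_⟩
        · intro p hp
          rcases List.mem_append.1 hp with hp | hp
          · exact hu2 p hp
          · simp only [List.mem_singleton] at hp; subst hp; exact ⟨hraA', hgp⟩
        · exact chain_snoc u.2 u.1 ra g hu3 (hlastu ▸ hanchR)
        · exact upchain_snoc u.2 u.1 ra g hup (Or.inr (by rw [hlastu]; rfl))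
        · simp only [List.length_append, List.length_singleton, hlen, hhtg, hhtr]; omega
        · intro a ha
          rw [letters_snoc] at ha
          rcases List.mem_append.1 ha with ha | ha
          · exact Or.inr (hsub a ha)
          · simp only [List.mem_singleton] at ha; subst ha; exact hself

/-- Lemma `ground (ii)`: if `h ∈ ε(g) \ {g}`, there is an uphill from `h` to `g` of length
`↑(g) − ↑(h)` all of whose letters lie in `ε(g)`. -/
theorem statement10 (g h : Letter) (hg : g ∈ Gp) (hh : h ∈ Gp)
    (hmem : h ∈ ground g) (hne : h ≠ g) :
    ∃ u : LS, IsUphill u ∧ u.1 = h ∧ lastL u = g ∧ u.2.length = ht g - ht h ∧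
      ∀ a ∈ letters u, a ∈ ground g :=
  main_ground g hg h hmem hne
end WGO
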